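/- arXiv:2205.14245 — 3 statements merged into one kernel-verified Lean document; each statement's English description precedes it below -/
import Mathlib

section
/- Suppose the difference-differential equations A·∂_x P_{n+1} = (l_n − C/2)P_{n+1} − w_0·B·P_n^{(1)} + Θ_n·P_n and A·∂_x P_n^{(1)} = (D/w_0)P_{n+1} + (l_n + C/2)P_n^{(1)} + Θ_n·P^{(1)}_{n-1} hold. Then the polynomial l_n satisfies (∏_{k=1}^n γ_k)·l_n = A(∂_x P_n^{(1)}·P_n − ∂_x P_{n+1}·P^{(1)}_{n-1}) − (C/2)(P_n^{(1)}·P_n + P_{n+1}·P^{(1)}_{n-1}) − (D/w_0)·P_{n+1}·P_n − w_0·B·P_n^{(1)}·P^{(1)}_{n-1}. -/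
open Polynomial

/-- Formula (eq:ln-def) for the polynomial `l_n` from the difference-differential
equations and the bilinear identity. -/
theorem ln_formula (n : ℕ) (hn : 1 ≤ n) (P Q : ℕ → Polynomial ℝ)
    (A B Cp D : Polynomial ℝ) (l Θ : ℕ → Polynomial ℝ) (γ : ℕ → ℝ) (w0 : ℝ)
    (hw0 : w0 ≠ 0) (hγ : ∀ k, γ k ≠ 0)
    (h1 : A * derivative (P (n + 1)) =
      (l n - Polynomial.C (1 / 2 : ℝ) * Cp) * P (n + 1)
        - Polynomial.C w0 * B * Q n + Θ n * P n)
    (h2 : A * derivative (Q n) =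
      Polynomial.C w0⁻¹ * D * P (n + 1)
        + (l n + Polynomial.C (1 / 2 : ℝ) * Cp) * Q n + Θ n * Q (n - 1))
    (hbil : Q n * P n - P (n + 1) * Q (n - 1) =
      Polynomial.C (∏ k ∈ Finset.Icc 1 n, γ k)) :
    Polynomial.C (∏ k ∈ Finset.Icc 1 n, γ k) * l n =
      A * (derivative (Q n) * P n - derivative (P (n + 1)) * Q (n - 1))
        - Polynomial.C (1 / 2 : ℝ) * Cp * (Q n * P n + P (n + 1) * Q (n - 1))
        - Polynomial.C w0⁻¹ * D * (P (n + 1) * P n)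
        - Polynomial.C w0 * B * (Q n * Q (n - 1)) := by
  linear_combination Q (n - 1) * h1 - P n * h2 - l n * hbil
end

section
/- If f satisfies (x−t)·∂_t f = −μ·f + ∂_t w_0 and f̃(x,t) = x − β_0(t) − w_0(t)/f(x,t) with f nowhere zero, and moreover (t−β_0)·∂_t(ln w_0) = ∂_t β_0 + μ, then f̃ satisfies the t-Riccati equation (x−t)·∂_t f̃ = B̂·f̃² + Ĉ·f̃ + D̂ with B̂ = ∂_t ln w_0, Ĉ(x) = −(∂_t ln w_0)·x + (2β_0 − t)·∂_t ln w_0 + μ, and D̂ = −(β_0 − t)·∂_t β_0. -/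
lemma key_alg (x t F Ft w wp b bp μ : ℝ) (hF : F ≠ 0) (hw : w ≠ 0)
    (E1 : (x - t) * Ft = -μ * F + wp) (E2 : (t - b) * wp = (bp + μ) * w) :
    (x - t) * (-bp - (wp * F - w * Ft) / F ^ 2) =
      (wp / w) * (x - b - w / F) ^ 2
        + (-(wp / w) * x + (2 * b - t) * (wp / w) + μ) * (x - b - w / F)
        + (-((b - t) * bp)) := by
  linear_combination (norm := (field_simp; ring)) (w / F ^ 2) * E1 + ((x - b) / w) * E2

noncomputable def pdt (g : ℝ × ℝ → ℝ) (z : ℝ × ℝ) : ℝ := fderiv ℝ g z (0, 1)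

lemma pdt_mobius (f : ℝ × ℝ → ℝ) (w0 β0 : ℝ → ℝ)
    (hf : ContDiff ℝ (⊤ : ℕ∞) f) (hfne : ∀ z, f z ≠ 0)
    (hw0 : ContDiff ℝ (⊤ : ℕ∞) w0) (hβ0 : ContDiff ℝ (⊤ : ℕ∞) β0) (z : ℝ × ℝ) :
    pdt (fun p : ℝ × ℝ => p.1 - β0 p.2 - w0 p.2 / f p) z =
      -deriv β0 z.2 - (deriv w0 z.2 * f z - w0 z.2 * pdt f z) / (f z) ^ 2 := by
  have hfz : HasFDerivAt f (fderiv ℝ f z) z := (hf.differentiable (by simp) z).hasFDerivAt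
  have hb : HasFDerivAt (fun p : ℝ × ℝ => β0 p.2)
      ((deriv β0 z.2) • ContinuousLinearMap.snd ℝ ℝ ℝ) z := by
    simpa [Function.comp_def] using ((hβ0.differentiable (by simp) z.2).hasDerivAt.comp_hasFDerivAt z hasFDerivAt_snd)
  have hw : HasFDerivAt (fun p : ℝ × ℝ => w0 p.2)
      ((deriv w0 z.2) • ContinuousLinearMap.snd ℝ ℝ ℝ) z := by
    simpa [Function.comp_def] using ((hw0.differentiable (by simp) z.2).hasDerivAt.comp_hasFDerivAt z hasFDerivAt_snd)
  have hinv : HasFDerivAt (fun p : ℝ × ℝ => (f p)⁻¹)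
      ((-(f z ^ 2)⁻¹) • fderiv ℝ f z) z :=
    (hasDerivAt_inv (hfne z)).comp_hasFDerivAt z hfz
  have hq : HasFDerivAt (fun p : ℝ × ℝ => w0 p.2 / f p)
      (w0 z.2 • ((-(f z ^ 2)⁻¹) • fderiv ℝ f z)
        + (f z)⁻¹ • ((deriv w0 z.2) • ContinuousLinearMap.snd ℝ ℝ ℝ)) z := by
    simpa [div_eq_mul_inv, Pi.mul_def] using hw.mul hinv
  have htot := (hasFDerivAt_fst.sub hb).sub hq
  rw [pdt, HasFDerivAt.fderiv (f := fun p : ℝ × ℝ => p.1 - β0 p.2 - w0 p.2 / f p) htot]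
  have h1 : f z ≠ 0 := hfne z
  simp [pdt, smul_smul]
  field_simp
  ring

/-- The Möbius transform `f̃ = x − β₀(t) − w₀(t)/f` satisfies the `t`-Riccati equation
`(x−t) ∂_t f̃ = B̂ f̃² + Ĉ f̃ + D̂`. -/
theorem mobius_t_riccati (μ : ℝ) (f : ℝ × ℝ → ℝ) (w0 β0 : ℝ → ℝ)
    (hf : ContDiff ℝ (⊤ : ℕ∞) f) (hfne : ∀ z, f z ≠ 0)
    (hw0 : ContDiff ℝ (⊤ : ℕ∞) w0) (hβ0 : ContDiff ℝ (⊤ : ℕ∞) β0) (hw0pos : ∀ t, 0 < w0 t)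
    (ht : ∀ z : ℝ × ℝ, (z.1 - z.2) * pdt f z = -μ * f z + deriv w0 z.2)
    (hmom : ∀ t : ℝ, (t - β0 t) * (deriv w0 t / w0 t) = deriv β0 t + μ)
    (ftil : ℝ × ℝ → ℝ)
    (hftil : ∀ z : ℝ × ℝ, ftil z = z.1 - β0 z.2 - w0 z.2 / f z) :
    ∀ z : ℝ × ℝ, (z.1 - z.2) * pdt ftil z =
      (deriv w0 z.2 / w0 z.2) * (ftil z) ^ 2
        + (-(deriv w0 z.2 / w0 z.2) * z.1
            + (2 * β0 z.2 - z.2) * (deriv w0 z.2 / w0 z.2) + μ) * ftil z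
        + (-((β0 z.2 - z.2) * deriv β0 z.2)) := by
  have hfe : ftil = fun p : ℝ × ℝ => p.1 - β0 p.2 - w0 p.2 / f p := funext hftil
  intro z
  have hwne : w0 z.2 ≠ 0 := (hw0pos z.2).ne'
  have E2 : (z.2 - β0 z.2) * deriv w0 z.2 = (deriv β0 z.2 + μ) * w0 z.2 := by
    linear_combination (norm := (field_simp; ring)) (w0 z.2) * hmom z.2
  rw [hfe, pdt_mobius f w0 β0 hf hfne hw0 hβ0 z]
  exact key_alg z.1 z.2 (f z) (pdt f z) (w0 z.2) (deriv w0 z.2) (β0 z.2) (deriv β0 z.2) μ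
    (hfne z) hwne (ht z) E2
end

section
/- Let φ = (D̃/w̃_0)(Ã + w̃_0·B̃) − C̃²/4 with Ã(x) = x(x−1)(x−t) and B̃, C̃, D̃ the explicit polynomials from the Möbius-transformed Jacobi system (with w̃_0 = −β_0² + [(2+α+β+μ+(2+α+β)t)β_0 − (1+α)t]/(3+α+β+μ)). Then the evaluations at the zeros of Ã satisfy φ(0)/t² = −α²/4, φ(1)/(t−1)² = −β²/4, and φ(t)/(t²(t−1)²) = −μ²/4. -/
/-- The evaluations of `φ = (D̃/w̃₀)(Ã + w̃₀ B̃) − C̃²/4` at the zeros of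
`Ã = x(x−1)(x−t)` are `φ(0)/t² = −α²/4`, `φ(1)/(t−1)² = −β²/4`,
`φ(t)/(t²(t−1)²) = −μ²/4`. -/
theorem phi_evaluations (α β μ t β0 wt0 : ℝ)
    (hsum : 3 + α + β + μ ≠ 0) (ht0 : t ≠ 0) (ht1 : t ≠ 1) (hwt0 : wt0 ≠ 0)
    (hwt0eq : wt0 = -β0 ^ 2
      + ((2 + α + β + μ + (2 + α + β) * t) * β0 - (1 + α) * t) / (3 + α + β + μ))
    (At Bt Ct Dt φ : ℝ → ℝ)
    (hAt : ∀ x, At x = x * (x - 1) * (x - t))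
    (hBt : ∀ x, Bt x = -(1 + α + β + μ) * x - (2 + α + β + μ) * β0
      + 1 + α + μ + (1 + α + β) * t)
    (hCt : ∀ x, Ct x = (2 + α + β + μ) * x ^ 2
      + (-(2 + α + μ) - (2 + α + β) * t + 2 * β0) * x - α * t + 2 * Bt 0 * β0)
    (hDt : ∀ x, Dt x = ((3 + α + β + μ) * β0 ^ 2
        - (2 + α + μ + (2 + α + β) * t) * β0 + (1 + α) * t) * x
      - (2 + α + β + μ) * β0 ^ 3 + (1 + α + μ + (1 + α + β) * t) * β0 ^ 2
      - α * t * β0)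
    (hφ : ∀ x, φ x = (Dt x / wt0) * (At x + wt0 * Bt x) - (Ct x) ^ 2 / 4) :
    φ 0 / t ^ 2 = -(α ^ 2) / 4 ∧
    φ 1 / (t - 1) ^ 2 = -(β ^ 2) / 4 ∧
    φ t / (t ^ 2 * (t - 1) ^ 2) = -(μ ^ 2) / 4 := by
  have h0 : φ 0 = Dt 0 * Bt 0 - (Ct 0) ^ 2 / 4 := by
    rw [hφ, hAt]; field_simp; ring
  have h1 : φ 1 = Dt 1 * Bt 1 - (Ct 1) ^ 2 / 4 := by
    rw [hφ, hAt]; field_simp; ring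
  have h2 : φ t = Dt t * Bt t - (Ct t) ^ 2 / 4 := by
    rw [hφ, hAt]; field_simp; ring
  have ht1' : t - 1 ≠ 0 := sub_ne_zero.mpr ht1
  refine ⟨?_, ?_, ?_⟩
  · rw [h0, hDt, hBt, hCt, hBt]; field_simp; ring
  · rw [h1, hDt, hBt, hCt, hBt]; field_simp; ring
  · rw [h2, hDt, hBt, hCt, hBt]; field_simp; ring
end
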